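/- The function f_D : (0, π) → ℝ defined by f_D(θ) = (1/π) L(θ) + (θ/π) log(2 sin θ), where L denotes the Lobachevsky function L(x) = −∫_0^x log(2 sin t) dt, is strictly concave on (0, π). -/
import Mathlib

open Real MeasureTheory intervalIntegral

/-- The Lobachevsky function `L(x) = -∫_0^x log(2 sin t) dt`. -/
noncomputable def lobachevsky (x : ℝ) : ℝ := -∫ t in (0 : ℝ)..x, Real.log (2 * Real.sin t)

/-- The per-edge dimer entropy function `f_D(θ) = (1/π) L(θ) + (θ/π) log(2 sin θ)`. -/
noncomputable def fD (θ : ℝ) : ℝ :=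
  (1 / Real.pi) * lobachevsky θ + (θ / Real.pi) * Real.log (2 * Real.sin θ)

lemma logsin_intInt_small {θ : ℝ} (h0 : 0 < θ) (hle : θ ≤ Real.pi / 2) :
    IntervalIntegrable (fun t => Real.log (2 * Real.sin t)) volume 0 θ := by
  have hg : IntervalIntegrable (fun t : ℝ => 2 * t ^ (-(1 : ℝ) / 2) + 3) volume 0 θ :=
    ((intervalIntegrable_rpow' (by norm_num)).const_mul 2).add intervalIntegrable_const
  refine hg.mono_fun' ?_ ?_
  · exact (Real.measurable_log.comp
      (measurable_const.mul Real.measurable_sin)).aestronglyMeasurable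
  · rw [Set.uIoc_of_le h0.le]
    refine (ae_restrict_iff' measurableSet_Ioc).2 (Filter.Eventually.of_forall fun t ht => ?_)
    have ht0 : 0 < t := ht.1
    have htpi2 : t ≤ Real.pi / 2 := le_trans ht.2 hle
    have htpi : t < Real.pi := lt_of_le_of_lt htpi2 (by linarith [Real.pi_pos])
    have hs : 0 < Real.sin t := Real.sin_pos_of_pos_of_lt_pi ht0 htpi
    have hrp : 0 < t ^ (-(1 : ℝ) / 2) := Real.rpow_pos_of_pos ht0 _
    have hsl : Real.sin t < t := Real.sin_lt ht0
    -- upper bound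
    have hub : Real.log (2 * Real.sin t) ≤ 2 * t ^ (-(1 : ℝ) / 2) + 3 := by
      have h1 : Real.log (2 * Real.sin t) ≤ 2 * Real.sin t - 1 :=
        Real.log_le_sub_one_of_pos (by positivity)
      have hpi : Real.pi ≤ 4 := Real.pi_le_four
      nlinarith
    -- lower bound
    have hlb : -(2 * t ^ (-(1 : ℝ) / 2) + 3) ≤ Real.log (2 * Real.sin t) := by
      have hms : 2 / Real.pi * t ≤ Real.sin t := Real.mul_le_sin ht0.le htpi2
      have hts : t ≤ 2 * Real.sin t := by
        have hpi : Real.pi ≤ 4 := Real.pi_le_four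
        have hpp : 0 < Real.pi := Real.pi_pos
        rw [div_mul_eq_mul_div, div_le_iff₀ hpp] at hms
        nlinarith
      have h1 : Real.log t ≤ Real.log (2 * Real.sin t) := Real.log_le_log ht0 hts
      have h2 : -Real.log t ≤ 2 * t ^ (-(1 : ℝ) / 2) := by
        have h3 : Real.log (t ^ (-(1 : ℝ) / 2)) ≤ t ^ (-(1 : ℝ) / 2) - 1 :=
          Real.log_le_sub_one_of_pos hrp
        rw [Real.log_rpow ht0] at h3
        linarith
      linarith
    simp only [Real.norm_eq_abs]
    exact abs_le.2 ⟨hlb, hub⟩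

lemma logsin_intInt {θ : ℝ} (h0 : 0 < θ) (hπ : θ < Real.pi) :
    IntervalIntegrable (fun t => Real.log (2 * Real.sin t)) volume 0 θ := by
  rcases le_or_gt θ (Real.pi / 2) with h | h
  · exact logsin_intInt_small h0 h
  · refine (logsin_intInt_small (by positivity) le_rfl).trans ?_
    apply ContinuousOn.intervalIntegrable
    refine ContinuousOn.log ((continuous_const.mul Real.continuous_sin).continuousOn) ?_
    intro t ht
    rw [Set.uIcc_of_le h.le] at ht
    have h1 : 0 < Real.sin t :=
      Real.sin_pos_of_pos_of_lt_pi (lt_of_lt_of_le (by positivity) ht.1)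
        (lt_of_le_of_lt ht.2 hπ)
    positivity

lemma fD_hasDerivAt {x : ℝ} (hx : x ∈ Set.Ioo 0 Real.pi) :
    HasDerivAt fD (x * Real.cos x / (Real.pi * Real.sin x)) x := by
  have hs : 0 < Real.sin x := Real.sin_pos_of_pos_of_lt_pi hx.1 hx.2
  have hs2 : (2 : ℝ) * Real.sin x ≠ 0 := by positivity
  have hpi : Real.pi ≠ 0 := Real.pi_ne_zero
  -- derivative of the integral
  have hint : HasDerivAt (fun u => ∫ t in (0 : ℝ)..u, Real.log (2 * Real.sin t))
      (Real.log (2 * Real.sin x)) x := by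
    refine intervalIntegral.integral_hasDerivAt_right (logsin_intInt hx.1 hx.2) ?_ ?_
    · exact (Real.measurable_log.comp
        (measurable_const.mul Real.measurable_sin)).stronglyMeasurable.stronglyMeasurableAtFilter
    · exact ((continuous_const.mul Real.continuous_sin).continuousAt).log hs2
  have h1 : HasDerivAt lobachevsky (-Real.log (2 * Real.sin x)) x := hint.neg
  -- derivative of θ/π * log(2 sin θ)
  have hsin : HasDerivAt (fun u => 2 * Real.sin u) (2 * Real.cos x) x :=
    (Real.hasDerivAt_sin x).const_mul 2
  have hlog : HasDerivAt (fun u => Real.log (2 * Real.sin u))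
      (2 * Real.cos x / (2 * Real.sin x)) x := hsin.log hs2
  have hid : HasDerivAt (fun u : ℝ => u / Real.pi) (1 / Real.pi) x := by
    simpa using (hasDerivAt_id x).div_const Real.pi
  have h2 := hid.mul hlog
  have h3 := (h1.const_mul (1 / Real.pi)).add h2
  have heq : (1 / Real.pi) * -Real.log (2 * Real.sin x) +
      (1 / Real.pi * Real.log (2 * Real.sin x) +
        x / Real.pi * (2 * Real.cos x / (2 * Real.sin x))) =
      x * Real.cos x / (Real.pi * Real.sin x) := by
    field_simp
    ring
  rw [heq] at h3
  exact h3

lemma aux_strictAnti :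
    StrictAntiOn (fun x => x * Real.cos x / (Real.pi * Real.sin x)) (Set.Ioo 0 Real.pi) := by
  have hd : ∀ x ∈ Set.Ioo 0 Real.pi,
      HasDerivAt (fun x => x * Real.cos x / (Real.pi * Real.sin x))
        (((1 * Real.cos x + x * -Real.sin x) * (Real.pi * Real.sin x) -
          x * Real.cos x * (Real.pi * Real.cos x)) / (Real.pi * Real.sin x) ^ 2) x := by
    intro x hx
    have hs : 0 < Real.sin x := Real.sin_pos_of_pos_of_lt_pi hx.1 hx.2
    have hps : Real.pi * Real.sin x ≠ 0 := by positivity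
    exact ((hasDerivAt_id x).mul (Real.hasDerivAt_cos x)).div
      ((Real.hasDerivAt_sin x).const_mul Real.pi) hps
  refine strictAntiOn_of_deriv_neg (convex_Ioo 0 Real.pi)
    (fun x hx => (hd x hx).continuousAt.continuousWithinAt) ?_
  rw [interior_Ioo]
  intro x hx
  rw [(hd x hx).deriv]
  have hs : 0 < Real.sin x := Real.sin_pos_of_pos_of_lt_pi hx.1 hx.2
  have hps : 0 < (Real.pi * Real.sin x) ^ 2 := by positivity
  apply div_neg_of_neg_of_pos _ hps
  have h2 : Real.sin (2 * x) < 2 * x := Real.sin_lt (by linarith [hx.1])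
  rw [Real.sin_two_mul] at h2
  have hnum : (1 * Real.cos x + x * -Real.sin x) * (Real.pi * Real.sin x) -
      x * Real.cos x * (Real.pi * Real.cos x) =
      Real.pi * (Real.sin x * Real.cos x - x) := by
    linear_combination (-(Real.pi * x)) * (Real.sin_sq_add_cos_sq x)
  rw [hnum]
  have hpp : 0 < Real.pi := Real.pi_pos
  nlinarith

/-- `f_D` is strictly concave on `(0, π)`. -/
theorem fD_strictConcaveOn : StrictConcaveOn ℝ (Set.Ioo 0 Real.pi) fD := by
  refine StrictAntiOn.strictConcaveOn_of_deriv (convex_Ioo 0 Real.pi)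
    (fun x hx => (fD_hasDerivAt hx).continuousAt.continuousWithinAt) ?_
  rw [interior_Ioo]
  exact aux_strictAnti.congr fun x hx => ((fD_hasDerivAt hx).deriv).symm
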